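/- arXiv:2303.03710 — 2 statements merged into one kernel-verified Lean document; each statement's English description precedes it below -/
import Mathlib

section
/- Let (X,d) be a complete metric space and let ψ, φ : (0,∞) → ℝ be nondecreasing functions. Let w : X → X be a continuous map that is a (ψ,φ)-contraction. Let H(X) denote the space of nonempty compact subsets of X equipped with the Hausdorff metric h_d, and define ŵ : H(X) → H(X) by ŵ(A) = w(A), the image of A under w. Then ŵ is a (ψ,φ)-contraction on (H(X), h_d); i.e., for all A, B ∈ H(X) with h_d(ŵ(A), ŵ(B)) > 0, one has ψ(h_d(ŵ(A), ŵ(B))) ≤ φ(h_d(A, B)). -/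
open Filter Topology Set TopologicalSpace

/-- The fractal operator `ŵ(A) = w(A)` on the space of nonempty compact subsets. -/
noncomputable def fractalOp {X : Type*} [MetricSpace X] (w : X → X) (hw : Continuous w)
    (A : NonemptyCompacts X) : NonemptyCompacts X :=
  ⟨⟨w '' A, A.isCompact.image hw⟩, A.nonempty.image w⟩

/-!
Let `D = h_d(A, B)`. The pairs `(a, b) ∈ A × B` with `d(a, b) ≤ D` form a nonempty compact set,
so `d(w a, w b)` attains a maximum `m` on it at some `(a₀, b₀)`. Every point of `w(A)` is within
`m` of `w(B)` and vice versa, so `h_d(w(A), w(B)) ≤ m`. Monotonicity of `ψ` and `φ` then gives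
`ψ(h_d(w(A), w(B))) ≤ ψ(m) ≤ φ(d(a₀, b₀)) ≤ φ(D)`.
-/

namespace Metric.NonemptyCompacts

variable {X Y : Type*} [MetricSpace X] [MetricSpace Y]

theorem exists_dist_le_dist {A : NonemptyCompacts X} {a : X} (ha : a ∈ A)
    (B : NonemptyCompacts X) : ∃ b ∈ B, dist a b ≤ dist A B := by
  obtain ⟨b, hb, hab⟩ := B.isCompact.exists_infDist_eq_dist B.nonempty a
  exact ⟨b, hb, hab ▸ infDist_le_hausdorffDist_of_mem ha (edist_ne_top A B)⟩

theorem isCompact_setOf_dist_le (A B : NonemptyCompacts X) (r : ℝ) :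
    IsCompact {p ∈ (A : Set X) ×ˢ (B : Set X) | dist p.1 p.2 ≤ r} :=
  (A.isCompact.prod B.isCompact).inter_right
    (isClosed_le (continuous_fst.dist continuous_snd) continuous_const)

theorem exists_hausdorffDist_image_le_dist {f : X → Y} (hf : Continuous f)
    (A B : NonemptyCompacts X) :
    ∃ a ∈ A, ∃ b ∈ B, dist a b ≤ dist A B ∧
      hausdorffDist (f '' A) (f '' B) ≤ dist (f a) (f b) := by
  have hne : {p ∈ (A : Set X) ×ˢ (B : Set X) | dist p.1 p.2 ≤ dist A B}.Nonempty := by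
    obtain ⟨a, ha⟩ := A.nonempty
    obtain ⟨b, hb, hab⟩ := exists_dist_le_dist ha B
    exact ⟨(a, b), ⟨ha, hb⟩, hab⟩
  obtain ⟨⟨a₀, b₀⟩, ⟨⟨ha₀, hb₀⟩, hab₀⟩, hmax⟩ :=
    (isCompact_setOf_dist_le A B (dist A B)).exists_isMaxOn hne
      (by fun_prop : Continuous fun p : X × X => dist (f p.1) (f p.2)).continuousOn
  refine ⟨a₀, ha₀, b₀, hb₀, hab₀, hausdorffDist_le_of_mem_dist dist_nonneg ?_ ?_⟩
  · rintro _ ⟨a, ha, rfl⟩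
    obtain ⟨b, hb, hab⟩ := exists_dist_le_dist ha B
    exact ⟨f b, mem_image_of_mem f hb, hmax (show (a, b) ∈ _ from ⟨⟨ha, hb⟩, hab⟩)⟩
  · rintro _ ⟨b, hb, rfl⟩
    obtain ⟨a, ha, hab⟩ := exists_dist_le_dist hb A
    rw [dist_comm b, dist_comm B] at hab
    refine ⟨f a, mem_image_of_mem f ha, ?_⟩
    rw [dist_comm]
    exact hmax (show (a, b) ∈ _ from ⟨⟨ha, hb⟩, hab⟩)

end Metric.NonemptyCompacts

theorem fractalOp_contraction_general {X : Type*} [MetricSpace X]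
    (ψ φ : ℝ → ℝ)
    (hψ_mono : ∀ s t : ℝ, 0 < s → s ≤ t → ψ s ≤ ψ t)
    (hφ_mono : ∀ s t : ℝ, 0 < s → s ≤ t → φ s ≤ φ t)
    (w : X → X) (hw : Continuous w)
    (hcontr : ∀ x y : X, 0 < dist (w x) (w y) → ψ (dist (w x) (w y)) ≤ φ (dist x y)) :
    ∀ A B : NonemptyCompacts X,
      0 < dist (fractalOp w hw A) (fractalOp w hw B) →
      ψ (dist (fractalOp w hw A) (fractalOp w hw B)) ≤ φ (dist A B) := by
  intro A B hpos
  obtain ⟨a, -, b, -, hab, himage⟩ :=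
    Metric.NonemptyCompacts.exists_hausdorffDist_image_le_dist hw A B
  have hle : dist (fractalOp w hw A) (fractalOp w hw B) ≤ dist (w a) (w b) := himage
  have hw_pos : 0 < dist (w a) (w b) := hpos.trans_le hle
  have hab_pos : 0 < dist a b := dist_pos.2 fun h => by simp [h] at hw_pos
  calc ψ (dist (fractalOp w hw A) (fractalOp w hw B)) ≤ ψ (dist (w a) (w b)) :=
        hψ_mono _ _ hpos hle
    _ ≤ φ (dist a b) := hcontr a b hw_pos
    _ ≤ φ (dist A B) := hφ_mono _ _ hab_pos hab

/-- If `w` is a continuous (ψ,φ)-contraction with `ψ, φ` nondecreasing, then the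
fractal operator `ŵ` is a (ψ,φ)-contraction on `(H(X), h_d)` (the space of nonempty
compact subsets with the Hausdorff metric). -/
theorem fractalOp_contraction {X : Type*} [MetricSpace X] [CompleteSpace X]
    (ψ φ : ℝ → ℝ)
    (hψ_mono : ∀ s t : ℝ, 0 < s → s ≤ t → ψ s ≤ ψ t)
    (hφ_mono : ∀ s t : ℝ, 0 < s → s ≤ t → φ s ≤ φ t)
    (w : X → X) (hw : Continuous w)
    (hcontr : ∀ x y : X, 0 < dist (w x) (w y) → ψ (dist (w x) (w y)) ≤ φ (dist x y)) :
    ∀ A B : NonemptyCompacts X,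
      0 < dist (fractalOp w hw A) (fractalOp w hw B) →
      ψ (dist (fractalOp w hw A) (fractalOp w hw B)) ≤ φ (dist A B) :=
  fractalOp_contraction_general ψ φ hψ_mono hφ_mono w hw hcontr
end

section
/- Let (X,d) be a complete metric space, let N ≥ 1, and let ψ, φ₁, …, φ_N : (0,∞) → ℝ be nondecreasing functions. Let w₁, …, w_N : X → X be continuous maps such that for each i, ψ(d(wᵢ(x), wᵢ(y))) ≤ φᵢ(d(x,y)) for all x, y ∈ X with d(wᵢ(x), wᵢ(y)) > 0. Let H(X) denote the space of nonempty compact subsets of X with the Hausdorff metric h_d, and define the fractal operator W : H(X) → H(X) by W(A) = ⋃_{i=1}^N wᵢ(A). Set φ(t) = max_{1≤i≤N} φᵢ(t) for t > 0. Then W is a (ψ,φ)-contraction on (H(X), h_d); i.e., for all A, B ∈ H(X) with h_d(W(A), W(B)) > 0, one has ψ(h_d(W(A), W(B))) ≤ φ(h_d(A, B)). -/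
open Filter Topology Set TopologicalSpace Metric

/-- The fractal operator `W(A) = ⋃ᵢ wᵢ(A)` generated by an iterated function system,
acting on the space of nonempty compact subsets. -/
noncomputable def ifsOp {X : Type*} [MetricSpace X] {N : ℕ} (hN : 0 < N)
    (w : Fin N → X → X) (hw : ∀ i, Continuous (w i))
    (A : NonemptyCompacts X) : NonemptyCompacts X :=
  ⟨⟨⋃ i, w i '' A, isCompact_iUnion fun i => A.isCompact.image (hw i)⟩,
    Set.nonempty_iUnion.mpr ⟨⟨0, hN⟩, A.nonempty.image _⟩⟩

private lemma ifs_aux {X : Type*} [MetricSpace X]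
    {N : ℕ} (hN : 0 < N)
    (ψ : ℝ → ℝ) (φ : Fin N → ℝ → ℝ)
    (hψ_mono : ∀ s t : ℝ, 0 < s → s ≤ t → ψ s ≤ ψ t)
    (hφ_mono : ∀ i, ∀ s t : ℝ, 0 < s → s ≤ t → φ i s ≤ φ i t)
    (w : Fin N → X → X) (hw : ∀ i, Continuous (w i))
    (hcontr : ∀ i, ∀ x y : X, 0 < dist (w i x) (w i y) →
      ψ (dist (w i x) (w i y)) ≤ φ i (dist x y))
    (A B : NonemptyCompacts X) (r : ℝ) (hr : 0 < r)
    (x0 : X) (hx0 : x0 ∈ (ifsOp hN w hw A : Set X))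
    (hle : r ≤ infDist x0 (ifsOp hN w hw B : Set X)) :
    ψ r ≤ Finset.univ.sup' (Finset.univ_nonempty_iff.mpr ⟨⟨0, hN⟩⟩)
        (fun i => φ i (dist A B)) := by
  obtain ⟨i, x, hxA, rfl⟩ : ∃ i, ∃ x ∈ (A : Set X), w i x = x0 := by
    simpa [ifsOp] using hx0
  obtain ⟨y, hyB, hy⟩ := B.isCompact.exists_infDist_eq_dist B.nonempty x
  have hmem : w i y ∈ (ifsOp hN w hw B : Set X) :=
    Set.mem_iUnion.mpr ⟨i, Set.mem_image_of_mem _ hyB⟩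
  have h1 : r ≤ dist (w i x) (w i y) := hle.trans (infDist_le_dist_of_mem hmem)
  have hd : 0 < dist (w i x) (w i y) := hr.trans_le h1
  have hxy : 0 < dist x y := by
    rcases eq_or_ne x y with h | h
    · simp [h] at hd
    · exact dist_pos.mpr h
  have hfin : EMetric.hausdorffEdist (A : Set X) (B : Set X) ≠ ⊤ :=
    hausdorffEdist_ne_top_of_nonempty_of_bounded A.nonempty B.nonempty
      A.isCompact.isBounded B.isCompact.isBounded
  have h2 : dist x y ≤ dist A B := by
    rw [NonemptyCompacts.dist_eq, ← hy]
    exact infDist_le_hausdorffDist_of_mem hxA hfin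
  calc ψ r ≤ ψ (dist (w i x) (w i y)) := hψ_mono _ _ hr h1
    _ ≤ φ i (dist x y) := hcontr i x y hd
    _ ≤ φ i (dist A B) := hφ_mono i _ _ hxy h2
    _ ≤ _ := Finset.le_sup' (fun i => φ i (dist A B)) (Finset.mem_univ i)

/-- If each `wᵢ` satisfies `ψ(d(wᵢ x, wᵢ y)) ≤ φᵢ(d(x,y))` with `ψ, φᵢ` nondecreasing,
then the fractal operator `W` generated by the IFS is a (ψ,φ)-contraction on
`(H(X), h_d)`, where `φ = maxᵢ φᵢ`. -/
theorem ifsOp_contraction {X : Type*} [MetricSpace X] [CompleteSpace X]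
    {N : ℕ} (hN : 0 < N)
    (ψ : ℝ → ℝ) (φ : Fin N → ℝ → ℝ)
    (hψ_mono : ∀ s t : ℝ, 0 < s → s ≤ t → ψ s ≤ ψ t)
    (hφ_mono : ∀ i, ∀ s t : ℝ, 0 < s → s ≤ t → φ i s ≤ φ i t)
    (w : Fin N → X → X) (hw : ∀ i, Continuous (w i))
    (hcontr : ∀ i, ∀ x y : X, 0 < dist (w i x) (w i y) →
      ψ (dist (w i x) (w i y)) ≤ φ i (dist x y)) :
    ∀ A B : NonemptyCompacts X,
      0 < dist (ifsOp hN w hw A) (ifsOp hN w hw B) →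
      ψ (dist (ifsOp hN w hw A) (ifsOp hN w hw B)) ≤
        Finset.univ.sup' (Finset.univ_nonempty_iff.mpr ⟨⟨0, hN⟩⟩)
          (fun i => φ i (dist A B)) := by
  intro A B hpos
  set WA := ifsOp hN w hw A with hWA
  set WB := ifsOp hN w hw B with hWB
  obtain ⟨x0, hx0, hx0max⟩ := WA.isCompact.exists_isMaxOn WA.nonempty
    ((continuous_infDist_pt (WB : Set X)).continuousOn)
  obtain ⟨y0, hy0, hy0max⟩ := WB.isCompact.exists_isMaxOn WB.nonempty
    ((continuous_infDist_pt (WA : Set X)).continuousOn)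
  have hle : dist WA WB ≤ max (infDist x0 (WB : Set X)) (infDist y0 (WA : Set X)) := by
    rw [NonemptyCompacts.dist_eq]
    apply hausdorffDist_le_of_infDist
      (le_max_of_le_left infDist_nonneg)
    · exact fun x hx => le_max_of_le_left (hx0max hx)
    · exact fun y hy => le_max_of_le_right (hy0max hy)
  rcases max_cases (infDist x0 (WB : Set X)) (infDist y0 (WA : Set X)) with ⟨he, _⟩ | ⟨he, _⟩
  · rw [he] at hle
    exact ifs_aux hN ψ φ hψ_mono hφ_mono w hw hcontr A B _ hpos x0 hx0 hle
  · rw [he] at hle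
    have := ifs_aux hN ψ φ hψ_mono hφ_mono w hw hcontr B A _ hpos y0 hy0 hle
    simpa [dist_comm] using this
end
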